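/- For every positive integer n, if ñ = 3·2^{⌊log₂ n⌋} - 2 - n, then g(n) = g(ñ), where g(n) = n(n+2)/3 - G(n). -/
import Mathlib


open Finset

/-- The largest odd divisor of `k`. -/
def oddPart (k : ℕ) : ℕ := ordCompl[2] k

/-- `V n = ∑_{k=1}^n α(k)/k` as a rational number. -/
def V (n : ℕ) : ℚ := ∑ k ∈ Finset.Icc 1 n, (oddPart k : ℚ) / k

/-- `v n = V n - 2n/3`. -/
def v (n : ℕ) : ℚ := V n - 2 * n / 3

/-- `U n = ∑_{k=1}^n α(k)`. -/
def U (n : ℕ) : ℕ := ∑ k ∈ Finset.Icc 1 n, oddPart k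

/-- `G n = ∑_{k=1}^n (n+1-k)·α(k)/k` as a rational number. -/
def G (n : ℕ) : ℚ := ∑ k ∈ Finset.Icc 1 n, ((n : ℚ) + 1 - k) * (oddPart k : ℚ) / k

/-- `g n = n(n+2)/3 - G n`. -/
def g (n : ℕ) : ℚ := n * (n + 2) / 3 - G n

lemma oddPart_odd {n : ℕ} (h : Odd n) : oddPart n = n := by
  unfold oddPart
  rw [Nat.factorization_eq_zero_of_not_dvd (by
    intro hd; exact (Nat.not_even_iff_odd.mpr h) (even_iff_two_dvd.mpr hd))]
  simp

lemma oddPart_two_mul (n : ℕ) : oddPart (2 * n) = oddPart n := by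
  unfold oddPart
  rw [Nat.ordCompl_mul]
  simp [Nat.Prime.factorization_self Nat.prime_two]

lemma V_succ (n : ℕ) : V (n + 1) = V n + (oddPart (n+1) : ℚ) / (n+1) := by
  unfold V
  rw [Finset.sum_Icc_succ_top (by omega)]
  push_cast
  ring

lemma V_double : ∀ m : ℕ, V (2 * m) = m + V m / 2 := by
  intro m
  induction m with
  | zero => simp [V]
  | succ m ih =>
    have h1 : V (2*m+1) = V (2*m) + 1 := by
      rw [V_succ, oddPart_odd ⟨m, by omega⟩]
      have : ((2*m+1 : ℕ) : ℚ) ≠ 0 := by positivity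
      push_cast
      field_simp
    have ho : oddPart (2*m+1+1) = oddPart (m+1) := by
      rw [show 2*m+1+1 = 2*(m+1) by ring, oddPart_two_mul]
    have h2 : V (2*(m+1)) = V (2*m+1) + (oddPart (m+1) : ℚ) / (2*((m:ℚ)+1)) := by
      rw [show 2*(m+1) = (2*m+1)+1 by ring, V_succ, ho]
      push_cast
      ring_nf
    rw [h2, h1, ih, V_succ]
    have : ((m:ℚ)+1) ≠ 0 := by positivity
    push_cast
    field_simp
    ring

lemma V_odd (m : ℕ) : V (2 * m + 1) = m + 1 + V m / 2 := by
  rw [V_succ, oddPart_odd ⟨m, by omega⟩, V_double]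
  have : ((2*m+1 : ℕ) : ℚ) ≠ 0 := by positivity
  push_cast
  field_simp
  ring

lemma G_succ (n : ℕ) : G (n + 1) = G n + V (n + 1) := by
  unfold G V
  rw [Finset.sum_Icc_succ_top (by omega), Finset.sum_Icc_succ_top (by omega)]
  rw [Finset.sum_congr rfl (fun k _ => by
    push_cast; ring : ∀ k ∈ Finset.Icc 1 n, (((n+1:ℕ) : ℚ) + 1 - k) * (oddPart k : ℚ) / k
      = ((n : ℚ) + 1 - k) * (oddPart k : ℚ) / k + (oddPart k : ℚ) / k)]
  rw [Finset.sum_add_distrib]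
  push_cast
  ring

lemma g_succ (n : ℕ) : g (n + 1) = g n + (2*(n:ℚ)+3)/3 - V (n + 1) := by
  unfold g
  rw [G_succ]
  push_cast
  ring

lemma g_odd : ∀ m : ℕ, g (2 * m + 1) = g m := by
  intro m
  induction m with
  | zero =>
    have h := g_succ 0
    have hV : V 1 = 1 := by
      have := V_odd 0
      simp [V] at this ⊢
      simpa [V] using this
    rw [show 2*0+1 = 0+1 by ring, h, hV]
    push_cast; ring
  | succ m ih =>
    have e1 : g (2*m+1+1) = g (2*m+1) + (2*(2*(m:ℚ)+1)+3)/3 - V (2*m+1+1) := by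
      have := g_succ (2*m+1); push_cast at this ⊢; linarith [this]
    have e2 : g (2*m+1+1+1) = g (2*m+1+1) + (2*(2*(m:ℚ)+2)+3)/3 - V (2*m+1+1+1) := by
      have := g_succ (2*m+2)
      rw [show 2*m+1+1+1 = 2*m+2+1 by ring, show 2*m+1+1 = 2*m+2 by ring]
      push_cast at this ⊢; linarith [this]
    have hV2 : V (2*m+1+1) = (m:ℚ) + 1 + V (m+1) / 2 := by
      rw [show 2*m+1+1 = 2*(m+1) by ring, V_double]; push_cast; ring
    have hV3 : V (2*m+1+1+1) = (m:ℚ) + 2 + V (m+1) / 2 := by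
      rw [show 2*m+1+1+1 = 2*(m+1)+1 by ring, V_odd]; push_cast; ring
    have e4 : g (m+1) = g m + (2*(m:ℚ)+3)/3 - V (m+1) := g_succ m
    rw [show 2*(m+1)+1 = 2*m+1+1+1 by ring]
    rw [e2, e1, hV2, hV3, ih, e4]
    ring

lemma g_even (m : ℕ) : g (2 * m + 2) = (g (m+1) + g m) / 2 + 1/6 := by
  have e1 : g (2*m+1+1) = g (2*m+1) + (2*(2*(m:ℚ)+1)+3)/3 - V (2*m+1+1) := by
    have := g_succ (2*m+1); push_cast at this ⊢; linarith [this]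
  have hV2 : V (2*m+1+1) = (m:ℚ) + 1 + V (m+1) / 2 := by
    rw [show 2*m+1+1 = 2*(m+1) by ring, V_double]; push_cast; ring
  have e4 : g (m+1) = g m + (2*(m:ℚ)+3)/3 - V (m+1) := g_succ m
  have ho := g_odd m
  rw [show 2*m+2 = 2*m+1+1 by ring, e1, hV2, ho]
  linarith [e4]

lemma g_reflect : ∀ n : ℕ, 0 < n → g n = g (3 * 2 ^ (Nat.log 2 n) - 2 - n) := by
  intro n
  induction n using Nat.strong_induction_on with
  | _ n ih =>
  intro hn
  rcases Nat.even_or_odd n with he | ho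
  · -- n even, n = 2m
    obtain ⟨m, hm⟩ := he
    have hm1 : 1 ≤ m := by omega
    obtain ⟨K, hK⟩ : ∃ K, Nat.log 2 m = K := ⟨_, rfl⟩
    have h1 : 2^K ≤ m := hK ▸ Nat.pow_log_le_self 2 (by omega)
    have h2 : m < 2^(K+1) := hK ▸ Nat.lt_pow_succ_log_self one_lt_two m
    have hp : (2:ℕ)^(K+1) = 2 * 2^K := by ring
    have hp2 : (2:ℕ)^(K+2) = 2 * 2^(K+1) := by ring
    have hp0 : 1 ≤ (2:ℕ)^K := Nat.one_le_two_pow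
    have hlog : Nat.log 2 n = K + 1 :=
      Nat.log_eq_of_pow_le_of_lt_pow (by omega) (by omega)
    obtain ⟨M, hM⟩ : ∃ M, 3 * 2^K - 2 - m = M := ⟨_, rfl⟩
    have hn2 : 3 * 2^(K+1) - 2 - n = 2*M + 2 := by omega
    rw [hlog, hn2]
    obtain ⟨m', rfl⟩ : ∃ m', m = m'+1 := ⟨m-1, by omega⟩
    have hg1 : g n = (g (m'+1) + g m')/2 + 1/6 := by
      rw [show n = 2*m'+2 by omega]; exact g_even m'
    have e1 : g (m'+1) = g M := by
      have h := ih (m'+1) (by omega) (by omega)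
      rwa [hK, hM] at h
    have e2 : g m' = g (M+1) := by
      by_cases hc : m'+1 = 2^K
      · have hM' : M + 1 = 2*m' + 1 := by omega
        rw [hM', g_odd]
      · have hlm' : Nat.log 2 m' = K :=
          Nat.log_eq_of_pow_le_of_lt_pow (by omega) (by omega)
        have h := ih m' (by omega) (by omega)
        rw [hlm'] at h
        rwa [show 3*2^K - 2 - m' = M + 1 by omega] at h
    rw [hg1, g_even M, e1, e2]; ring
  · obtain ⟨m, hm⟩ := ho
    by_cases h0 : m = 0
    · subst h0
      have h := g_odd 0
      norm_num at h hm
      subst hm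
      simpa using h
    · obtain ⟨K, hK⟩ : ∃ K, Nat.log 2 m = K := ⟨_, rfl⟩
      have h1 : 2^K ≤ m := hK ▸ Nat.pow_log_le_self 2 (by omega)
      have h2 : m < 2^(K+1) := hK ▸ Nat.lt_pow_succ_log_self one_lt_two m
      have hp : (2:ℕ)^(K+1) = 2 * 2^K := by ring
      have hp2 : (2:ℕ)^(K+2) = 2 * 2^(K+1) := by ring
      have hp0 : 1 ≤ (2:ℕ)^K := Nat.one_le_two_pow
      have hlog : Nat.log 2 n = K + 1 :=
        Nat.log_eq_of_pow_le_of_lt_pow (by omega) (by omega)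
      obtain ⟨M, hM⟩ : ∃ M, 3 * 2^K - 2 - m = M := ⟨_, rfl⟩
      have hn2 : 3 * 2^(K+1) - 2 - n = 2*M + 1 := by omega
      rw [hlog, hn2, g_odd, hm, g_odd]
      have h := ih m (by omega) (by omega)
      rwa [hK, hM] at h

theorem stmt18 (n : ℕ) (hn : 0 < n) :
    g n = g (3 * 2 ^ (Nat.log 2 n) - 2 - n) := g_reflect n hn
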